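/- For every w ∈ [0,1], the total same-nation matchup probability under Method 16, T(w) = (1/7)w^4 + (6/7)(1/3)w^6 + (6/7)(2/3)w^8, is at most the total under the unconstrained draw, S_free(w) = 1/31 + (30/31)*[(1/15)w^2 + (14/15)(1/7)w^4 + (14/15)(6/7)(1/3)w^6 + (14/15)(6/7)(2/3)w^8]. -/
import Mathlib

noncomputable def T (w : ℝ) : ℝ :=
  (1/7) * w^4 + (6/7) * (1/3) * w^6 + (6/7) * (2/3) * w^8

noncomputable def S_free (w : ℝ) : ℝ :=
  1/31 + (30/31) * ((1/15) * w^2 + (14/15) * (1/7) * w^4 +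
    (14/15) * (6/7) * (1/3) * w^6 + (14/15) * (6/7) * (2/3) * w^8)

theorem T_le_S_free (w : ℝ) (hw0 : 0 ≤ w) (hw1 : w ≤ 1) : T w ≤ S_free w := by
  unfold T S_free
  nlinarith [pow_le_one₀ hw0 hw1 (n := 2), pow_le_one₀ hw0 hw1 (n := 4),
    pow_le_one₀ hw0 hw1 (n := 6), pow_le_one₀ hw0 hw1 (n := 8),
    pow_nonneg hw0 2, pow_nonneg hw0 4, pow_nonneg hw0 6, pow_nonneg hw0 8,
    pow_le_pow_of_le_one hw0 hw1 (show 2 ≤ 4 by norm_num),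
    pow_le_pow_of_le_one hw0 hw1 (show 2 ≤ 6 by norm_num),
    pow_le_pow_of_le_one hw0 hw1 (show 2 ≤ 8 by norm_num)]
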